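/- arXiv:2004.08643 — 5 statements merged into one kernel-verified Lean document; each statement's English description precedes it below -/
import Mathlib

section
/- Let $P, Q, R$ be real $n\times n$ matrices with $P$ symmetric and invertible and $R$ symmetric. Define the $2n\times 2n$ matrix $B = \begin{bmatrix} P^{-1} & -P^{-1}Q \\ -Q^T P^{-1} & Q^T P^{-1} Q - R \end{bmatrix}$ and let $J = \begin{bmatrix} 0 & -I \\ I & 0 \end{bmatrix}$ be the standard symplectic matrix. Then $JB$ is hyperbolic (i.e. has no purely imaginary eigenvalues, equivalently no eigenvalues on the imaginary axis) if and only if $\det\big[a^2 P + ia(Q^T - Q) + R\big] \neq 0$ for every $a \in \mathbb{R}$. -/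
/-!
Since `J² = -1`, we have `JB + z = J (B - zJ)`. The block matrix `B - zJ` has the invertible
upper-left block `P⁻¹`, so by the Schur complement formula
`det (B - zJ) = det P⁻¹ · det (z² P + z (Qᵀ - Q) - R)`. For `z = ia` the last matrix is
`-((-a)² P + i(-a)(Qᵀ - Q) + R)`, and `a ↦ -a` is a bijection of `ℝ`.
-/

open Matrix

namespace Matrix

variable {m K : Type*} [Fintype m] [DecidableEq m] [CommRing K]

theorem schur_complement_sub_smul_J (P Q R : Matrix m m K) (hP : IsUnit P) (z : K) :
    (Qᵀ * P⁻¹ * Q - R) - (-(Qᵀ * P⁻¹) - z • 1) * P * (-(P⁻¹ * Q) + z • 1)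
      = z ^ 2 • P + z • (Qᵀ - Q) - R := by
  have hdet := (isUnit_iff_isUnit_det P).mp hP
  have cancel : ∀ X : Matrix m m K, P * (P⁻¹ * X) = X := fun X => by
    rw [← Matrix.mul_assoc, mul_nonsing_inv P hdet, Matrix.one_mul]
  simp only [Matrix.sub_mul, Matrix.mul_add, Matrix.neg_mul, Matrix.mul_neg, Matrix.smul_mul,
    Matrix.mul_smul, Matrix.mul_assoc, cancel, nonsing_inv_mul P hdet, Matrix.mul_one,
    Matrix.one_mul]
  module

theorem det_J_mul_fromBlocks_add_smul_one (P Q R : Matrix m m K) (hP : IsUnit P) (z : K) :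
    det (J m K * fromBlocks P⁻¹ (-(P⁻¹ * Q)) (-(Qᵀ * P⁻¹)) (Qᵀ * P⁻¹ * Q - R) + z • 1)
      = det (J m K) * det P⁻¹ * det (z ^ 2 • P + z • (Qᵀ - Q) - R) := by
  set B := fromBlocks P⁻¹ (-(P⁻¹ * Q)) (-(Qᵀ * P⁻¹)) (Qᵀ * P⁻¹ * Q - R)
  have hJ : J m K * B + z • 1 = J m K * (B - z • J m K) := by
    rw [Matrix.mul_sub, Matrix.mul_smul, J_squared, smul_neg, sub_neg_eq_add]
  have hblocks : B - z • J m K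
      = fromBlocks P⁻¹ (-(P⁻¹ * Q) + z • 1) (-(Qᵀ * P⁻¹) - z • 1) (Qᵀ * P⁻¹ * Q - R) := by
    simp only [B, J, fromBlocks_smul, sub_eq_add_neg, fromBlocks_neg, fromBlocks_add]
    simp
  have := hP.invertible
  rw [hJ, det_mul, mul_assoc, hblocks, det_fromBlocks₁₁, invOf_eq_nonsing_inv,
    inv_inv_of_invertible, schur_complement_sub_smul_J P Q R hP]

theorem map_nonsing_inv {L : Type*} [CommRing L] (f : K →+* L) (M : Matrix m m K)
    (hM : IsUnit M.det) : M⁻¹.map f = (M.map f)⁻¹ := by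
  refine (inv_eq_left_inv ?_).symm
  rw [← f.mapMatrix_apply, ← f.mapMatrix_apply, ← map_mul, nonsing_inv_mul M hM, map_one]

theorem map_J_mul_fromBlocks {L : Type*} [CommRing L] (f : K →+* L) (P Q R : Matrix m m K)
    (hP : IsUnit P) :
    (J m K * fromBlocks P⁻¹ (-(P⁻¹ * Q)) (-(Qᵀ * P⁻¹)) (Qᵀ * P⁻¹ * Q - R)).map f
      = J m L * fromBlocks (P.map f)⁻¹ (-((P.map f)⁻¹ * Q.map f)) (-((Q.map f)ᵀ * (P.map f)⁻¹))
          ((Q.map f)ᵀ * (P.map f)⁻¹ * Q.map f - R.map f) := by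
  have hdet := (isUnit_iff_isUnit_det P).mp hP
  simp only [← f.mapMatrix_apply, map_mul]
  simp [fromBlocks_map, map_nonsing_inv f P hdet, transpose_map, Matrix.map_mul, Matrix.map_sub,
    Matrix.map_neg]

theorem det_J_mul_fromBlocks_ofReal_add_I_smul (P Q R : Matrix m m ℝ) (hP : IsUnit P) (a : ℝ) :
    det ((J m ℝ * fromBlocks P⁻¹ (-(P⁻¹ * Q)) (-(Qᵀ * P⁻¹)) (Qᵀ * P⁻¹ * Q - R)).map
        Complex.ofReal + (a : ℂ) • Complex.I • (1 : Matrix (m ⊕ m) (m ⊕ m) ℂ))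
      = (-1) ^ Fintype.card m * det (J m ℂ) * det (P.map Complex.ofReal)⁻¹ *
        det ((-a : ℂ) ^ 2 • P.map Complex.ofReal +
          (-a : ℂ) • Complex.I • (Qᵀ - Q).map Complex.ofReal + R.map Complex.ofReal) := by
  set Pc := P.map Complex.ofReal
  set Qc := Q.map Complex.ofReal
  set Rc := R.map Complex.ofReal
  have hmap : (J m ℝ * fromBlocks P⁻¹ (-(P⁻¹ * Q)) (-(Qᵀ * P⁻¹)) (Qᵀ * P⁻¹ * Q - R)).map
      Complex.ofReal
        = J m ℂ * fromBlocks Pc⁻¹ (-(Pc⁻¹ * Qc)) (-(Qcᵀ * Pc⁻¹)) (Qcᵀ * Pc⁻¹ * Qc - Rc) :=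
    map_J_mul_fromBlocks Complex.ofRealHom P Q R hP
  have hPc : IsUnit Pc := hP.map Complex.ofRealHom.mapMatrix
  have hS : ((a : ℂ) * Complex.I) ^ 2 • Pc + ((a : ℂ) * Complex.I) • (Qcᵀ - Qc) - Rc
      = -((-a : ℂ) ^ 2 • Pc + (-a : ℂ) • Complex.I • (Qᵀ - Q).map Complex.ofReal + Rc) := by
    rw [mul_pow, Complex.I_sq, transpose_map.symm, ← Matrix.map_sub _ Complex.ofReal_sub]
    module
  rw [hmap, smul_smul, det_J_mul_fromBlocks_add_smul_one _ _ _ hPc, hS, det_neg]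
  ring

end Matrix

theorem stmt0_general (n : ℕ) (P Q R : Matrix (Fin n) (Fin n) ℝ)
    (hPinv : IsUnit P) :
    (∀ a : ℝ,
      ((((fromBlocks 0 (-1) 1 0 : Matrix (Fin n ⊕ Fin n) (Fin n ⊕ Fin n) ℝ) *
          fromBlocks P⁻¹ (-(P⁻¹ * Q)) (-(Qᵀ * P⁻¹)) (Qᵀ * P⁻¹ * Q - R)).map
            Complex.ofReal) +
        (a : ℂ) • Complex.I • (1 : Matrix (Fin n ⊕ Fin n) (Fin n ⊕ Fin n) ℂ)).det ≠ 0)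
    ↔ (∀ a : ℝ,
      ((a : ℂ) ^ 2 • P.map Complex.ofReal +
        (a : ℂ) • Complex.I • ((Qᵀ - Q).map Complex.ofReal) +
        R.map Complex.ofReal).det ≠ 0) := by
  have hPc : IsUnit (P.map Complex.ofReal) := hPinv.map Complex.ofRealHom.mapMatrix
  have hPc_inv : (P.map Complex.ofReal)⁻¹.det ≠ 0 :=
    (isUnit_nonsing_inv_det _ ((isUnit_iff_isUnit_det _).mp hPc)).ne_zero
  simp only [show (fromBlocks 0 (-1) 1 0 : Matrix (Fin n ⊕ Fin n) (Fin n ⊕ Fin n) ℝ) =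
      J (Fin n) ℝ from rfl, det_J_mul_fromBlocks_ofReal_add_I_smul P Q R hPinv, ne_eq,
    mul_eq_zero, pow_eq_zero_iff', neg_eq_zero, one_ne_zero, false_and,
    (isUnit_det_J _ ℂ).ne_zero, hPc_inv, false_or]
  exact ⟨fun h a => by simpa using h (-a), fun h a => by simpa using h (-a)⟩

/-- Hyperbolicity criterion: `JB` is hyperbolic (no eigenvalues on the imaginary axis)
iff `det (a² P + i a (Qᵀ - Q) + R) ≠ 0` for all real `a`. -/
theorem stmt0 (n : ℕ) (P Q R : Matrix (Fin n) (Fin n) ℝ)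
    (hP : P.IsSymm) (hPinv : IsUnit P) (hR : R.IsSymm) :
    (∀ a : ℝ,
      ((((fromBlocks 0 (-1) 1 0 : Matrix (Fin n ⊕ Fin n) (Fin n ⊕ Fin n) ℝ) *
          fromBlocks P⁻¹ (-(P⁻¹ * Q)) (-(Qᵀ * P⁻¹)) (Qᵀ * P⁻¹ * Q - R)).map
            Complex.ofReal) +
        (a : ℂ) • Complex.I • (1 : Matrix (Fin n ⊕ Fin n) (Fin n ⊕ Fin n) ℂ)).det ≠ 0)
    ↔ (∀ a : ℝ,
      ((a : ℂ) ^ 2 • P.map Complex.ofReal +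
        (a : ℂ) • Complex.I • ((Qᵀ - Q).map Complex.ofReal) +
        R.map Complex.ofReal).det ≠ 0) :=
  stmt0_general n P Q R hPinv
end

section
/- Let $P, Q, R$ be real $n\times n$ matrices with $P, R$ symmetric and $P$ invertible, and suppose the symmetric $2n\times 2n$ block matrix $\begin{bmatrix} P & Q \\ Q^T & R \end{bmatrix}$ is positive definite. Then the matrix $JB$ is hyperbolic, where $B = \begin{bmatrix} P^{-1} & -P^{-1}Q \\ -Q^T P^{-1} & Q^T P^{-1} Q - R \end{bmatrix}$ and $J = \begin{bmatrix} 0 & -I \\ I & 0 \end{bmatrix}$. -/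
/-!
With `c = i a` and `J² = -1` we have `J B + c = J (B - c J)`, and the Schur complement of the
invertible block `P⁻¹` in `B - c J` is `-(R + c (Q - Qᵀ) - c² P)`. Because `c̄ = -c`, the
quadratic form of `R + c (Q - Qᵀ) - c² P` at `x` is that of `[P Q; Qᵀ R]` at `(-c x, x)`, so
positive definiteness of the block matrix forces this Schur complement to be nonsingular.
-/

open Matrix
open scoped ComplexOrder

namespace Matrix

variable {n α : Type*} [Fintype n]

theorem map_nonsing_inv_s1 [DecidableEq n] {β : Type*} [CommRing α] [CommRing β] (f : α →+* β)
    {A : Matrix n n α} (hA : IsUnit A.det) : A⁻¹.map f = (A.map f)⁻¹ :=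
  (inv_eq_left_inv (by
    rw [← Matrix.map_mul, nonsing_inv_mul A hA, Matrix.map_one _ f.map_zero f.map_one])).symm

theorem J_mul_fromBlocks_add_smul_one [DecidableEq n] [CommRing α] (A B C D : Matrix n n α)
    (c : α) :
    J n α * fromBlocks A B C D + c • 1 = J n α * fromBlocks A (B + c • 1) (C - c • 1) D := by
  simp only [J, fromBlocks_multiply, ← fromBlocks_one, fromBlocks_smul, fromBlocks_add]
  congr 1 <;> simp only [Matrix.zero_mul, Matrix.neg_mul, Matrix.one_mul, zero_add, add_zero,
    smul_zero, neg_sub]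
  all_goals abel

theorem det_fromBlocks_inv_shift [DecidableEq n] [CommRing α] {P : Matrix n n α} [Invertible P]
    (Q R : Matrix n n α) (c : α) :
    (fromBlocks P⁻¹ (-(P⁻¹ * Q) + c • 1) (-(Qᵀ * P⁻¹) - c • 1) (Qᵀ * P⁻¹ * Q - R)).det =
      P⁻¹.det * (-(R + c • (Q - Qᵀ) - (c * c) • P)).det := by
  rw [det_fromBlocks₁₁, invOf_eq_nonsing_inv, inv_inv_of_invertible]
  congr 2
  simp only [Matrix.sub_mul, Matrix.mul_add, Matrix.neg_mul, Matrix.mul_neg, smul_mul_assoc,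
    mul_smul_comm, Matrix.one_mul, Matrix.mul_one, Matrix.mul_assoc, inv_mul_of_invertible,
    mul_inv_of_invertible, ← Matrix.mul_assoc P]
  module

theorem star_sumElim_dotProduct_fromBlocks_mulVec [CommRing α] [StarRing α]
    (P Q R : Matrix n n α) {c : α} (hc : star c = -c) (x : n → α) :
    star (Sum.elim (-c • x) x) ⬝ᵥ fromBlocks P Q Qᵀ R *ᵥ Sum.elim (-c • x) x =
      star x ⬝ᵥ (R + c • (Q - Qᵀ) - (c * c) • P) *ᵥ x := by
  rw [fromBlocks_mulVec, Function.star_sumElim, sumElim_dotProduct_sumElim]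
  simp only [Sum.elim_comp_inl, Sum.elim_comp_inr, star_smul, star_neg, hc, neg_neg,
    mulVec_smul, add_mulVec, sub_mulVec, smul_mulVec, dotProduct_add, dotProduct_sub,
    dotProduct_smul, smul_dotProduct, smul_eq_mul]
  ring

variable {𝕜 : Type*} [RCLike 𝕜]

theorem PosDef.map_ofReal {A : Matrix n n ℝ} (hA : A.PosDef) :
    (A.map ((↑) : ℝ → 𝕜)).PosDef := by
  have hherm : (A.map ((↑) : ℝ → 𝕜)).IsHermitian :=
    hA.isHermitian.map _ fun _ => (RCLike.conj_ofReal _).symm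
  refine .of_dotProduct_mulVec_pos hherm fun x hx => RCLike.pos_iff.mpr
    ⟨?_, hherm.im_star_dotProduct_mulVec_self x⟩
  set u : n → ℝ := fun i => RCLike.re (x i)
  set v : n → ℝ := fun i => RCLike.im (x i)
  have hre : RCLike.re (star x ⬝ᵥ A.map ((↑) : ℝ → 𝕜) *ᵥ x) =
      u ⬝ᵥ A *ᵥ u + v ⬝ᵥ A *ᵥ v := by
    simp only [u, v, dotProduct, mulVec, Pi.star_apply, map_apply, Finset.mul_sum, map_sum,
      RCLike.mul_re, RCLike.mul_im, RCLike.ofReal_re, RCLike.ofReal_im, RCLike.star_def,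
      RCLike.conj_re, RCLike.conj_im, ← Finset.sum_add_distrib]
    exact Finset.sum_congr rfl fun i _ => Finset.sum_congr rfl fun j _ => by ring
  have hpos (y : n → ℝ) (hy : y ≠ 0) : 0 < y ⬝ᵥ A *ᵥ y := by
    simpa using hA.dotProduct_mulVec_pos hy
  have hnonneg (y : n → ℝ) : 0 ≤ y ⬝ᵥ A *ᵥ y := by
    simpa using hA.posSemidef.dotProduct_mulVec_nonneg y
  have huv : u ≠ 0 ∨ v ≠ 0 := by
    by_contra! h
    exact hx (funext fun i => RCLike.ext (by simpa using congrFun h.1 i)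
      (by simpa using congrFun h.2 i))
  rw [hre]
  rcases huv with hu | hv
  · linarith [hpos u hu, hnonneg v]
  · linarith [hnonneg u, hpos v hv]

theorem det_add_smul_sub_smul_ne_zero [DecidableEq n] {P Q R : Matrix n n 𝕜}
    (hS : (fromBlocks P Q Qᵀ R).PosDef) {c : 𝕜} (hc : star c = -c) :
    (R + c • (Q - Qᵀ) - (c * c) • P).det ≠ 0 := by
  intro hdet
  obtain ⟨x, hx, hMx⟩ := exists_mulVec_eq_zero_iff.mpr hdet
  have hw : Sum.elim (-c • x) x ≠ 0 := fun h => hx (funext fun i => congrFun h (Sum.inr i))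
  have := hS.dotProduct_mulVec_pos hw
  rw [star_sumElim_dotProduct_fromBlocks_mulVec P Q R hc, hMx, dotProduct_zero] at this
  exact this.false

theorem det_J_mul_fromBlocks_add_smul_one_ne_zero [DecidableEq n] {P Q R : Matrix n n 𝕜}
    (hS : (fromBlocks P Q Qᵀ R).PosDef) {c : 𝕜} (hc : star c = -c) :
    (J n 𝕜 * fromBlocks P⁻¹ (-(P⁻¹ * Q)) (-(Qᵀ * P⁻¹)) (Qᵀ * P⁻¹ * Q - R) + c • 1).det ≠ 0 := by
  have hP : P.PosDef := hS.submatrix Sum.inl_injective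
  have := hP.isUnit.invertible
  rw [J_mul_fromBlocks_add_smul_one, det_mul, det_fromBlocks_inv_shift, det_neg]
  exact mul_ne_zero (isUnit_det_J n 𝕜).ne_zero <|
    mul_ne_zero (isUnit_det_of_invertible _).ne_zero <|
      mul_ne_zero (pow_ne_zero _ (neg_ne_zero.mpr one_ne_zero))
        (det_add_smul_sub_smul_ne_zero hS hc)

end Matrix

theorem stmt1_general (n : ℕ) (P Q R : Matrix (Fin n) (Fin n) ℝ)
    (hpos : (fromBlocks P Q Qᵀ R).PosDef) :
    ∀ a : ℝ,
      ((((fromBlocks 0 (-1) 1 0 : Matrix (Fin n ⊕ Fin n) (Fin n ⊕ Fin n) ℝ) *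
          fromBlocks P⁻¹ (-(P⁻¹ * Q)) (-(Qᵀ * P⁻¹)) (Qᵀ * P⁻¹ * Q - R)).map
            Complex.ofReal) +
        (a : ℂ) • Complex.I • (1 : Matrix (Fin n ⊕ Fin n) (Fin n ⊕ Fin n) ℂ)).det ≠ 0 := by
  intro a
  have hP : IsUnit P.det :=
    (isUnit_iff_isUnit_det P).mp (hpos.submatrix Sum.inl_injective : P.PosDef).isUnit
  have hS : (fromBlocks (P.map Complex.ofReal) (Q.map Complex.ofReal) (Q.map Complex.ofReal)ᵀ
      (R.map Complex.ofReal)).PosDef := by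
    have := hpos.map_ofReal (𝕜 := ℂ)
    rwa [fromBlocks_map, transpose_map] at this
  have hc : star ((a : ℂ) * Complex.I) = -((a : ℂ) * Complex.I) := by simp
  let f := Complex.ofRealHom
  have hB : (J (Fin n) ℝ * fromBlocks P⁻¹ (-(P⁻¹ * Q)) (-(Qᵀ * P⁻¹)) (Qᵀ * P⁻¹ * Q - R)).map f =
      J (Fin n) ℂ * fromBlocks (P.map f)⁻¹ (-((P.map f)⁻¹ * Q.map f))
        (-((Q.map f)ᵀ * (P.map f)⁻¹)) ((Q.map f)ᵀ * (P.map f)⁻¹ * Q.map f - R.map f) := by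
    simp [f, J, Matrix.map_mul, Matrix.map_neg, Matrix.map_sub, transpose_map, fromBlocks_map,
      ← map_nonsing_inv_s1 Complex.ofRealHom hP]
  rw [smul_smul]
  exact hB ▸ det_J_mul_fromBlocks_add_smul_one_ne_zero hS hc

/-- If the block matrix `[[P, Q], [Qᵀ, R]]` is positive definite, then `JB` is hyperbolic. -/
theorem stmt1 (n : ℕ) (P Q R : Matrix (Fin n) (Fin n) ℝ)
    (hP : P.IsSymm) (hR : R.IsSymm) (hPinv : IsUnit P)
    (hpos : (fromBlocks P Q Qᵀ R).PosDef) :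
    ∀ a : ℝ,
      ((((fromBlocks 0 (-1) 1 0 : Matrix (Fin n ⊕ Fin n) (Fin n ⊕ Fin n) ℝ) *
          fromBlocks P⁻¹ (-(P⁻¹ * Q)) (-(Qᵀ * P⁻¹)) (Qᵀ * P⁻¹ * Q - R)).map
            Complex.ofReal) +
        (a : ℂ) • Complex.I • (1 : Matrix (Fin n ⊕ Fin n) (Fin n ⊕ Fin n) ℂ)).det ≠ 0 :=
  stmt1_general n P Q R hpos
end

section
/- Let $P$ be a real symmetric invertible $n\times n$ matrix and $Q$ any real $n\times n$ matrix. Then there exists $\widehat\lambda > 0$ such that for every $\lambda > \widehat\lambda$ and every $a\in\mathbb{R}$, the matrix $a^2 P + ia(Q^T - Q) + \lambda P = (a^2+\lambda)P\big[I + \tfrac{ia}{a^2+\lambda}P^{-1}(Q^T-Q)\big]$ is invertible. Consequently, setting $R_\lambda = \lambda P$, the matrix $JB_\lambda$ with $B_\lambda = \begin{bmatrix} P^{-1} & -P^{-1}Q \\ -Q^T P^{-1} & Q^T P^{-1} Q - \lambda P \end{bmatrix}$ is hyperbolic for all $\lambda > \widehat\lambda$. -/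
open Matrix

/-!
Factor `a²P + ia(Qᵀ - Q) + λP = P((a² + λ)I + ia P⁻¹(Qᵀ - Q))`. Under a submultiplicative
matrix norm the second factor is invertible by the Neumann series as soon as
`|a| ‖P⁻¹(Qᵀ - Q)‖ < a² + λ`, which holds for every real `a` once `λ > ‖P⁻¹(Qᵀ - Q)‖²`.
For hyperbolicity, the lower-left block of `JB_λ + ia I` is the invertible `P⁻¹`, and the
corresponding Schur complement is `(a² + λ)P - ia(Qᵀ - Q)`, the same matrix at `-a`.
-/

attribute [local instance] Matrix.linftyOpNormedRing Matrix.linftyOpNormedAlgebra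

section NeumannSeries

variable {𝕜 A : Type*} [NormedField 𝕜] [NormedRing A] [NormedAlgebra 𝕜 A] [HasSummableGeomSeries A]

theorem isUnit_smul_one_add_smul_of_norm_mul_lt {s c : 𝕜} {K : A} (h : ‖c‖ * ‖K‖ < ‖s‖) :
    IsUnit (s • (1 : A) + c • K) := by
  have hs : s ≠ 0 := norm_pos_iff.mp ((mul_nonneg (norm_nonneg c) (norm_nonneg K)).trans_lt h)
  have hsmall : ‖-((c / s) • K)‖ < 1 := by
    rw [norm_neg, norm_smul, norm_div, div_mul_eq_mul_div, div_lt_one (norm_pos_iff.mpr hs)]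
    exact h
  have hfactor : s • (1 : A) + c • K = algebraMap 𝕜 A s * (1 - -((c / s) • K)) := by
    rw [sub_neg_eq_add, Algebra.algebraMap_eq_smul_one, smul_one_mul, smul_add, smul_smul,
      mul_div_cancel₀ c hs]
  rw [hfactor]
  exact (hs.isUnit.map (algebraMap 𝕜 A)).mul (isUnit_one_sub_of_norm_lt_one hsmall)

end NeumannSeries

theorem exists_forall_isUnit_sq_add_smul_add_mul_I_smul {A : Type*} [NormedRing A]
    [NormedAlgebra ℂ A] [HasSummableGeomSeries A] {p : A} (hp : IsUnit p) (S : A) :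
    ∃ lam₀ : ℝ, 0 < lam₀ ∧ ∀ lam : ℝ, lam₀ < lam → ∀ a : ℝ,
      IsUnit (((a : ℂ) ^ 2 + lam) • p + ((a : ℂ) * Complex.I) • S) := by
  obtain ⟨u, rfl⟩ := hp
  set K := ↑u⁻¹ * S
  refine ⟨‖K‖ ^ 2 + 1, by positivity, fun lam hlam a => ?_⟩
  -- the paper's estimate `|a| / (a² + λ) ≤ 1 / (2√λ)`, in the form `2|a|‖K‖ ≤ a² + ‖K‖²`
  have hkey : |a| * ‖K‖ < a ^ 2 + lam := by
    nlinarith [sq_nonneg (|a| - ‖K‖), sq_abs a, abs_nonneg a, norm_nonneg K]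
  have hsmall : ‖(a : ℂ) * Complex.I‖ * ‖K‖ < ‖((a : ℂ) ^ 2 + lam)‖ := by
    have hcast : ((a : ℂ) ^ 2 + lam) = ((a ^ 2 + lam : ℝ) : ℂ) := by push_cast; rfl
    have hpos : 0 < a ^ 2 + lam := by nlinarith [sq_nonneg a, norm_nonneg K]
    rwa [hcast, norm_mul, Complex.norm_I, mul_one, Complex.norm_real, Complex.norm_real,
      Real.norm_eq_abs, Real.norm_eq_abs, abs_of_pos hpos]
  have hfactor : ((a : ℂ) ^ 2 + lam) • (u : A) + ((a : ℂ) * Complex.I) • S =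
      u * (((a : ℂ) ^ 2 + lam) • (1 : A) + ((a : ℂ) * Complex.I) • K) := by
    rw [mul_add, mul_smul_comm, mul_smul_comm, mul_one, Units.mul_inv_cancel_left]
  rw [hfactor]
  exact u.isUnit.mul (isUnit_smul_one_add_smul_of_norm_mul_lt hsmall)

section Hamiltonian

variable {m : Type*} [Fintype m] [DecidableEq m]

/-- The matrix `J B_λ`, where `J` is the standard symplectic matrix. -/
noncomputable def hamiltonian {K : Type*} [CommRing K] (P Q : Matrix m m K) (lam : K) :
    Matrix (m ⊕ m) (m ⊕ m) K :=
  fromBlocks 0 (-1) 1 0 * fromBlocks P⁻¹ (-(P⁻¹ * Q)) (-(Qᵀ * P⁻¹)) (Qᵀ * P⁻¹ * Q - lam • P)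

theorem nonsing_inv_map_of_isUnit {R S : Type*} [CommRing R] [CommRing S] (f : R →+* S)
    {P : Matrix m m R} (hP : IsUnit P) : P⁻¹.map f = (P.map f)⁻¹ := by
  refine (inv_eq_left_inv ?_).symm
  rw [← Matrix.map_mul, nonsing_inv_mul P ((isUnit_iff_isUnit_det P).mp hP),
    Matrix.map_one _ f.map_zero f.map_one]

theorem hamiltonian_map {R S : Type*} [CommRing R] [CommRing S] (f : R →+* S)
    {P : Matrix m m R} (hP : IsUnit P) (Q : Matrix m m R) (lam : R) :
    (hamiltonian P Q lam).map f = hamiltonian (P.map f) (Q.map f) (f lam) := by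
  simp [hamiltonian, fromBlocks_map, Matrix.map_mul, Matrix.map_sub, Matrix.map_neg, transpose_map,
    nonsing_inv_map_of_isUnit f hP, Matrix.map_smul' _ _ _ (map_mul f)]

variable {K : Type*} [Field K]

theorem det_fromBlocks_swap_eq_zero_iff (A B C D : Matrix m m K) :
    (fromBlocks C D A B).det = 0 ↔ (fromBlocks A B C D).det = 0 := by
  have h : ((fromBlocks A B C D).submatrix Sum.swap id).det = _ :=
    det_permute (Equiv.sumComm m m) _
  rw [fromBlocks_submatrix_sum_swap_left, submatrix_id_id] at h
  rw [h]
  exact ((Equiv.Perm.sign _).isUnit.map (Int.castRingHom K)).mul_right_eq_zero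

theorem hamiltonian_schur_complement_eq {P : Matrix m m K} (hP : IsUnit P) (Q : Matrix m m K)
    (lam c : K) :
    lam • P - Qᵀ * P⁻¹ * Q - (Qᵀ * P⁻¹ + c • 1) * P * (-(P⁻¹ * Q) + c • 1) =
      (lam - c ^ 2) • P - c • (Qᵀ - Q) := by
  have hPd := (isUnit_iff_isUnit_det P).mp hP
  have e1 : (Qᵀ * P⁻¹ + c • 1) * P = Qᵀ + c • P := by
    rw [add_mul, Matrix.mul_assoc, nonsing_inv_mul P hPd, mul_one, smul_one_mul]
  have e2 : Qᵀ * (P⁻¹ * Q) = Qᵀ * P⁻¹ * Q := (Matrix.mul_assoc _ _ _).symm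
  have e3 : P * (P⁻¹ * Q) = Q := by rw [← Matrix.mul_assoc, mul_nonsing_inv P hPd, one_mul]
  rw [e1]
  simp only [add_mul, mul_add, mul_neg, Matrix.smul_mul, Matrix.mul_smul, mul_one, e2, e3]
  module

theorem det_hamiltonian_add_smul_one_eq_zero_iff {P : Matrix m m K} (hP : IsUnit P)
    (Q : Matrix m m K) (lam c : K) :
    (hamiltonian P Q lam + c • 1).det = 0 ↔ ((lam - c ^ 2) • P - c • (Qᵀ - Q)).det = 0 := by
  have hblocks : hamiltonian P Q lam + c • 1 =
      fromBlocks (Qᵀ * P⁻¹ + c • 1) (lam • P - Qᵀ * P⁻¹ * Q) P⁻¹ (-(P⁻¹ * Q) + c • 1) := by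
    rw [hamiltonian, fromBlocks_multiply, ← fromBlocks_one, fromBlocks_smul, fromBlocks_add]
    simp
  cases hP.nonempty_invertible
  have hinv : ⅟(P⁻¹) = P := by rw [invOf_eq_nonsing_inv, inv_inv_of_invertible]
  rw [hblocks, ← det_fromBlocks_swap_eq_zero_iff, det_fromBlocks₁₁, hinv, hamiltonian_schur_complement_eq hP Q,
    mul_eq_zero, or_iff_right (isUnit_iff_ne_zero.mp (isUnit_det_of_invertible P⁻¹))]

end Hamiltonian

theorem stmt7_general (n : ℕ) (P Q : Matrix (Fin n) (Fin n) ℝ)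
    (hPinv : IsUnit P) :
    ∃ lam₀ : ℝ, 0 < lam₀ ∧ ∀ lam : ℝ, lam₀ < lam →
      (∀ a : ℝ,
        IsUnit ((a : ℂ) ^ 2 • P.map Complex.ofReal +
          (a : ℂ) • Complex.I • ((Qᵀ - Q).map Complex.ofReal) +
          (lam : ℂ) • P.map Complex.ofReal)) ∧
      (∀ a : ℝ,
        ((((fromBlocks 0 (-1) 1 0 : Matrix (Fin n ⊕ Fin n) (Fin n ⊕ Fin n) ℝ) *
            fromBlocks P⁻¹ (-(P⁻¹ * Q)) (-(Qᵀ * P⁻¹))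
              (Qᵀ * P⁻¹ * Q - lam • P)).map Complex.ofReal) +
          (a : ℂ) • Complex.I • (1 : Matrix (Fin n ⊕ Fin n) (Fin n ⊕ Fin n) ℂ)).det ≠ 0) := by
  have hP : IsUnit (P.map Complex.ofRealHom) := hPinv.map Complex.ofRealHom.mapMatrix
  obtain ⟨lam₀, hlam₀, hunit⟩ :=
    exists_forall_isUnit_sq_add_smul_add_mul_I_smul hP ((Qᵀ - Q).map Complex.ofReal)
  refine ⟨lam₀, hlam₀, fun lam hlam => ⟨fun a => ?_, fun a => ?_⟩⟩
  · convert hunit lam hlam a using 1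
    module
  · change ((hamiltonian P Q lam).map Complex.ofRealHom + _).det ≠ 0
    rw [hamiltonian_map _ hPinv, smul_smul, Ne, det_hamiltonian_add_smul_one_eq_zero_iff hP]
    convert ((isUnit_iff_isUnit_det _).mp (hunit lam hlam (-a))).ne_zero using 2
    congr 1
    have hS : (Qᵀ - Q).map Complex.ofReal =
        (Q.map Complex.ofRealHom)ᵀ - Q.map Complex.ofRealHom := by
      ext i j; simp
    rw [hS, Complex.ofRealHom_eq_coe, mul_pow, Complex.I_sq]
    push_cast
    module

/-- For `P` symmetric invertible and `R_λ = λP`, there is `λ̂ > 0` such that for all `λ > λ̂`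
and all real `a` the matrix `a²P + ia(Qᵀ-Q) + λP` is invertible; consequently the Hamiltonian
matrix `JB_λ` is hyperbolic for all `λ > λ̂`. -/
theorem stmt7 (n : ℕ) (P Q : Matrix (Fin n) (Fin n) ℝ)
    (hP : P.IsSymm) (hPinv : IsUnit P) :
    ∃ lam₀ : ℝ, 0 < lam₀ ∧ ∀ lam : ℝ, lam₀ < lam →
      (∀ a : ℝ,
        IsUnit ((a : ℂ) ^ 2 • P.map Complex.ofReal +
          (a : ℂ) • Complex.I • ((Qᵀ - Q).map Complex.ofReal) +
          (lam : ℂ) • P.map Complex.ofReal)) ∧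
      (∀ a : ℝ,
        ((((fromBlocks 0 (-1) 1 0 : Matrix (Fin n ⊕ Fin n) (Fin n ⊕ Fin n) ℝ) *
            fromBlocks P⁻¹ (-(P⁻¹ * Q)) (-(Qᵀ * P⁻¹))
              (Qᵀ * P⁻¹ * Q - lam • P)).map Complex.ofReal) +
          (a : ℂ) • Complex.I • (1 : Matrix (Fin n ⊕ Fin n) (Fin n ⊕ Fin n) ℂ)).det ≠ 0) :=
  stmt7_general n P Q hPinv
end

section
/- Let $(\mathbb{R}^{2n}, \omega)$ be the standard symplectic space with $\omega(u,v) = \langle Ju, v\rangle$, $J = \begin{bmatrix} 0 & -I \\ I & 0 \end{bmatrix}$. Let $P$ be a real symmetric positive definite $n\times n$ matrix, $Q$ arbitrary, $R$ symmetric, and let $B = \begin{bmatrix} P^{-1} & -P^{-1}Q \\ -Q^T P^{-1} & Q^T P^{-1} Q - R \end{bmatrix}$. Let $V \subseteq \mathbb{R}^{2n}$ be any subspace invariant under $JB$ that is isotropic for $\omega$ (e.g. a Lagrangian spectral subspace of the hyperbolic matrix $JB$). Then $V \cap L_D = \{0\}$, where $L_D = \mathbb{R}^n \times \{0\}$ is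 the horizontal (Dirichlet) Lagrangian. -/
open Matrix

section

variable {m R : Type*} [Fintype m] [DecidableEq m]

theorem fromBlocks_zero_neg_one_one_zero_mul_self [Ring R] :
    (fromBlocks 0 (-1) 1 0 : Matrix (m ⊕ m) (m ⊕ m) R) * fromBlocks 0 (-1) 1 0 = -1 := by
  simp [fromBlocks_multiply, ← fromBlocks_one, fromBlocks_neg]

/-- Isotropy applied to `J B z` and `z` gives `0 = J (J B z) ⬝ᵥ z = -(B z ⬝ᵥ z)`. -/
theorem dotProduct_mulVec_self_eq_zero_of_isotropic [CommRing R] {J B : Matrix m m R}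
    (hJ : J * J = -1) {V : Submodule R (m → R)} (hinv : ∀ x ∈ V, (J * B) *ᵥ x ∈ V)
    (hiso : ∀ x ∈ V, ∀ y ∈ V, J *ᵥ x ⬝ᵥ y = 0) {z : m → R} (hz : z ∈ V) :
    B *ᵥ z ⬝ᵥ z = 0 := by
  have h := hiso _ (hinv z hz) z hz
  rwa [mulVec_mulVec, ← mul_assoc, hJ, neg_one_mul, neg_mulVec, neg_dotProduct,
    neg_eq_zero] at h

end

theorem fromBlocks_mulVec_sum_elim_zero_dotProduct {m n R : Type*} [Fintype m] [Fintype n]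
    [CommSemiring R] (A : Matrix m m R) (B : Matrix m n R) (C : Matrix n m R)
    (D : Matrix n n R) (u : m → R) :
    fromBlocks A B C D *ᵥ Sum.elim u 0 ⬝ᵥ Sum.elim u 0 = A *ᵥ u ⬝ᵥ u := by
  simp [fromBlocks_mulVec, dotProduct_block]

theorem stmt9_general (n : ℕ) (P Q R : Matrix (Fin n) (Fin n) ℝ)
    (hP : P.PosDef)
    (V : Submodule ℝ ((Fin n ⊕ Fin n) → ℝ))
    (hinv : ∀ x ∈ V,
      (((fromBlocks 0 (-1) 1 0 : Matrix (Fin n ⊕ Fin n) (Fin n ⊕ Fin n) ℝ) *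
        fromBlocks P⁻¹ (-(P⁻¹ * Q)) (-(Qᵀ * P⁻¹)) (Qᵀ * P⁻¹ * Q - R)).mulVec x) ∈ V)
    (hiso : ∀ x ∈ V, ∀ y ∈ V,
      ((fromBlocks 0 (-1) 1 0 : Matrix (Fin n ⊕ Fin n) (Fin n ⊕ Fin n) ℝ).mulVec x) ⬝ᵥ y = 0) :
    ∀ z ∈ V, (∀ i, z (Sum.inr i) = 0) → z = 0 := by
  intro z hz hz_inr
  have hz_eq : z = Sum.elim (z ∘ Sum.inl) 0 := by
    ext (i | i) <;> simp [hz_inr]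
  have hform := dotProduct_mulVec_self_eq_zero_of_isotropic
    fromBlocks_zero_neg_one_one_zero_mul_self hinv hiso hz
  rw [hz_eq, fromBlocks_mulVec_sum_elim_zero_dotProduct] at hform
  have hu : z ∘ Sum.inl = 0 := by
    by_contra hu
    exact (hP.inv.dotProduct_mulVec_pos hu).ne' (by rwa [dotProduct_comm, star_trivial])
  rw [hz_eq, hu, Sum.elim_zero_zero]

/-- Any isotropic subspace `V` invariant under `JB` is transversal to the Dirichlet
Lagrangian `L_D = ℝⁿ × {0}`. -/
theorem stmt9 (n : ℕ) (P Q R : Matrix (Fin n) (Fin n) ℝ)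
    (hP : P.PosDef) (hR : R.IsSymm)
    (V : Submodule ℝ ((Fin n ⊕ Fin n) → ℝ))
    (hinv : ∀ x ∈ V,
      (((fromBlocks 0 (-1) 1 0 : Matrix (Fin n ⊕ Fin n) (Fin n ⊕ Fin n) ℝ) *
        fromBlocks P⁻¹ (-(P⁻¹ * Q)) (-(Qᵀ * P⁻¹)) (Qᵀ * P⁻¹ * Q - R)).mulVec x) ∈ V)
    (hiso : ∀ x ∈ V, ∀ y ∈ V,
      ((fromBlocks 0 (-1) 1 0 : Matrix (Fin n ⊕ Fin n) (Fin n ⊕ Fin n) ℝ).mulVec x) ⬝ᵥ y = 0) :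
    ∀ z ∈ V, (∀ i, z (Sum.inr i) = 0) → z = 0 :=
  stmt9_general n P Q R hP V hinv hiso
end

section
/- In the standard symplectic space $(\mathbb{R}^{2n},\omega)$, let $\alpha, \beta, \delta$ be three Lagrangian subspaces. Define the bilinear form $\mathfrak{Q}(\alpha,\beta;\delta)$ on $\alpha \cap (\beta + \delta)$ by $\mathfrak{Q}(x_1, x_2) = \omega(y_1, z_2)$, where $x_j = y_j + z_j$ with $y_j \in \beta$, $z_j \in \delta$ (any such decomposition). Then the kernel of $\mathfrak{Q}(\alpha,\beta;\delta)$ equals $\alpha\cap\beta + \alpha\cap\delta$. -/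
open Matrix

/-- The standard symplectic matrix `J` on `ℝ²ⁿ`. -/
def sympJ (n : ℕ) : Matrix (Fin n ⊕ Fin n) (Fin n ⊕ Fin n) ℝ :=
  Matrix.fromBlocks 0 (-1) 1 0

/-- The standard symplectic form `ω(x, y) = ⟨Jx, y⟩`. -/
def omegaJ (n : ℕ) (x y : (Fin n ⊕ Fin n) → ℝ) : ℝ :=
  ((sympJ n).mulVec x) ⬝ᵥ y

/-- A Lagrangian subspace: isotropic of dimension `n`. -/
def IsLagrangian (n : ℕ) (L : Submodule ℝ ((Fin n ⊕ Fin n) → ℝ)) : Prop :=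
  (∀ x ∈ L, ∀ y ∈ L, omegaJ n x y = 0) ∧ Module.finrank ℝ L = n

/-!
For a nondegenerate reflexive form a Lagrangian subspace is its own orthogonal, and taking
orthogonals exchanges `⊓` and `⊔`, so `(α ⊓ (β ⊔ δ))ᗮ = α ⊔ (β ⊓ δ)`. If `x = y + z` is in the
kernel of `𝔔`, then `ω(y, x') = ω(y, y') + ω(y, z') = 0` for every `x' = y' + z'` in
`α ⊓ (β ⊔ δ)`, so `y = a + w` with `a ∈ α`, `w ∈ β ⊓ δ`, and `x = (y - w) + (z + w)` splits
along `α ⊓ β` and `α ⊓ δ`. Conversely, if `x = u + v` with `u ∈ α ⊓ β`, `v ∈ α ⊓ δ`, then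
`y - u = v - z ∈ δ` and `ω(y, z') = ω(u, x') - ω(u, y') + ω(y - u, z')` vanishes by isotropy.
-/

namespace LinearMap.BilinForm

section CommSemiring

variable {R M : Type*} [CommSemiring R] [AddCommMonoid M] [Module R M]
  (B : LinearMap.BilinForm R M)

lemma orthogonal_sup (X Y : Submodule R M) :
    B.orthogonal (X ⊔ Y) = B.orthogonal X ⊓ B.orthogonal Y := by
  refine le_antisymm (le_inf (orthogonal_le le_sup_left) (orthogonal_le le_sup_right)) ?_
  rintro m ⟨hX, hY⟩ w hw
  obtain ⟨a, ha, b, hb, rfl⟩ := Submodule.mem_sup.1 hw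
  simp [hX a ha, hY b hb]

end CommSemiring

section CommRing

variable {R M : Type*} [CommRing R] [AddCommGroup M] [Module R M] {B : LinearMap.BilinForm R M}
  {α β δ : Submodule R M} {x y z : M}

lemma apply_eq_zero_of_mem_sup_inf (hα : α ≤ B.orthogonal α) (hβ : β ≤ B.orthogonal β)
    (hδ : δ ≤ B.orthogonal δ) (hx : x ∈ α ⊓ β ⊔ α ⊓ δ) (hz : z ∈ δ)
    (hxyz : x = y + z) {x' y' z' : M} (hx' : x' ∈ α) (hy' : y' ∈ β) (hz' : z' ∈ δ)
    (hx'yz : x' = y' + z') : B y z' = 0 := by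
  obtain ⟨u, ⟨huα, huβ⟩, v, ⟨-, hvδ⟩, rfl⟩ := Submodule.mem_sup.1 hx
  have hw : y - u ∈ δ := by
    rw [show y - u = v - z by rw [sub_eq_sub_iff_add_eq_add, ← hxyz, add_comm]]
    exact δ.sub_mem hvδ hz
  have hux' : B u x' = 0 := hα hx' u huα
  have huy' : B u y' = 0 := hβ hy' u huβ
  have hwz' : B (y - u) z' = 0 := hδ hz' _ hw
  calc B y z' = B u x' - B u y' + B (y - u) z' := by
        rw [hx'yz, map_add, map_sub, LinearMap.sub_apply]; abel
    _ = 0 := by rw [hux', huy', hwz', sub_zero, add_zero]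

end CommRing

variable {K V : Type*} [Field K] [AddCommGroup V] [Module K V] [FiniteDimensional K V]
  {B : LinearMap.BilinForm K V} {α β δ : Submodule K V} {x y z : V}

lemma orthogonal_inf (hB : B.Nondegenerate) (hB₀ : B.IsRefl) (X Y : Submodule K V) :
    B.orthogonal (X ⊓ Y) = B.orthogonal X ⊔ B.orthogonal Y := by
  conv_lhs => rw [← orthogonal_orthogonal hB hB₀ X, ← orthogonal_orthogonal hB hB₀ Y,
    ← orthogonal_sup]
  exact orthogonal_orthogonal hB hB₀ _

lemma orthogonal_inf_sup_of_orthogonal_eq_self (hB : B.Nondegenerate) (hB₀ : B.IsRefl)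
    (hα : B.orthogonal α = α) (hβ : B.orthogonal β = β) (hδ : B.orthogonal δ = δ) :
    B.orthogonal (α ⊓ (β ⊔ δ)) = α ⊔ (β ⊓ δ) := by
  rw [orthogonal_inf hB hB₀, orthogonal_sup, hα, hβ, hδ]

lemma orthogonal_eq_self_of_le_orthogonal (hB : B.Nondegenerate) {L : Submodule K V}
    (hL : L ≤ B.orthogonal L)
    (hdim : Module.finrank K V = Module.finrank K L + Module.finrank K L) :
    B.orthogonal L = L := by
  refine (Submodule.eq_of_le_of_finrank_le hL ?_).symm
  rw [finrank_orthogonal hB, hdim, Nat.add_sub_cancel]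

lemma mem_sup_inf_of_forall_apply_eq_zero (hB : B.Nondegenerate) (hB₀ : B.IsRefl)
    (hα : B.orthogonal α = α) (hβ : B.orthogonal β = β) (hδ : B.orthogonal δ = δ)
    (hx : x ∈ α) (hy : y ∈ β) (hz : z ∈ δ) (hxyz : x = y + z)
    (h : ∀ x' ∈ α ⊓ (β ⊔ δ), ∀ y' ∈ β, ∀ z' ∈ δ, x' = y' + z' → B y z' = 0) :
    x ∈ α ⊓ β ⊔ α ⊓ δ := by
  have hy_orth : y ∈ B.orthogonal (α ⊓ (β ⊔ δ)) := by
    intro x' hx'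
    obtain ⟨y', hy', z', hz', rfl⟩ := Submodule.mem_sup.1 hx'.2
    refine hB₀ _ _ ?_
    rw [map_add, h _ hx' y' hy' z' hz' rfl, hβ.ge hy' y hy, add_zero]
  rw [orthogonal_inf_sup_of_orthogonal_eq_self hB hB₀ hα hβ hδ] at hy_orth
  obtain ⟨a, ha, w, ⟨hwβ, hwδ⟩, rfl⟩ := Submodule.mem_sup.1 hy_orth
  have hxa : z + w = x - a := by rw [hxyz]; abel
  refine Submodule.mem_sup.2 ⟨a, ⟨ha, ?_⟩, z + w, ⟨?_, δ.add_mem hz hwδ⟩, by rw [hxyz]; abel⟩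
  · simpa using β.sub_mem hy hwβ
  · exact hxa ▸ α.sub_mem hx ha

theorem mem_inf_sup_inf_iff (hB : B.Nondegenerate) (hB₀ : B.IsRefl)
    (hα : B.orthogonal α = α) (hβ : B.orthogonal β = β) (hδ : B.orthogonal δ = δ)
    (hx : x ∈ α ⊓ (β ⊔ δ)) :
    x ∈ α ⊓ β ⊔ α ⊓ δ ↔ ∀ x' ∈ α ⊓ (β ⊔ δ), ∀ y ∈ β, ∀ z ∈ δ, ∀ y' ∈ β, ∀ z' ∈ δ,
      x = y + z → x' = y' + z' → B y z' = 0 := by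
  constructor
  · intro hmem x' hx' y _ z hz y' hy' z' hz' hxyz hx'yz
    exact apply_eq_zero_of_mem_sup_inf hα.ge hβ.ge hδ.ge hmem hz hxyz hx'.1 hy' hz' hx'yz
  · intro h
    obtain ⟨y, hy, z, hz, hyz⟩ := Submodule.mem_sup.1 hx.2
    exact mem_sup_inf_of_forall_apply_eq_zero hB hB₀ hα hβ hδ hx.1 hy hz hyz.symm
      fun x' hx' y' hy' z' hz' => h x' hx' y hy z hz y' hy' z' hz' hyz.symm

end LinearMap.BilinForm

lemma sympJ_transpose (n : ℕ) : (sympJ n)ᵀ = -sympJ n := J_transpose _ _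

noncomputable def sympForm (n : ℕ) : LinearMap.BilinForm ℝ ((Fin n ⊕ Fin n) → ℝ) :=
  toBilin' (sympJ n)ᵀ

lemma sympForm_apply (n : ℕ) (x y : (Fin n ⊕ Fin n) → ℝ) : sympForm n x y = omegaJ n x y := by
  rw [sympForm, toBilin'_apply', mulVec_transpose, dotProduct_comm, ← dotProduct_mulVec,
    dotProduct_comm, omegaJ]

lemma sympForm_swap (n : ℕ) (x y : (Fin n ⊕ Fin n) → ℝ) : sympForm n y x = -sympForm n x y := by
  rw [sympForm_apply n x y, omegaJ, sympForm, toBilin'_apply', sympJ_transpose, neg_mulVec,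
    dotProduct_neg, dotProduct_comm]

lemma sympForm_isRefl (n : ℕ) : (sympForm n).IsRefl := fun x y h => by
  rw [sympForm_swap, h, neg_zero]

lemma sympForm_nondegenerate (n : ℕ) : (sympForm n).Nondegenerate := by
  refine LinearMap.BilinForm.nondegenerate_toBilin'_of_det_ne_zero' _ ?_
  rw [det_transpose]
  exact (isUnit_det_J (Fin n) ℝ).ne_zero

lemma IsLagrangian.orthogonal_eq {n : ℕ} {L : Submodule ℝ ((Fin n ⊕ Fin n) → ℝ)}
    (hL : IsLagrangian n L) : (sympForm n).orthogonal L = L := by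
  refine (sympForm n).orthogonal_eq_self_of_le_orthogonal (sympForm_nondegenerate n)
    (fun x hx y hy => by rw [sympForm_apply]; exact hL.1 y hy x hx) ?_
  simp [hL.2]

/-- The kernel of the form `𝔔(α,β;δ)(x₁,x₂) = ω(y₁,z₂)` (for decompositions `xⱼ = yⱼ + zⱼ`,
`yⱼ ∈ β`, `zⱼ ∈ δ`) on `α ∩ (β + δ)` equals `α∩β + α∩δ`. -/
theorem stmt11 (n : ℕ) (α β δ : Submodule ℝ ((Fin n ⊕ Fin n) → ℝ))
    (hα : IsLagrangian n α) (hβ : IsLagrangian n β) (hδ : IsLagrangian n δ) :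
    ∀ x ∈ α ⊓ (β ⊔ δ),
      (x ∈ (α ⊓ β) ⊔ (α ⊓ δ) ↔
        ∀ x' ∈ α ⊓ (β ⊔ δ), ∀ y ∈ β, ∀ z ∈ δ, ∀ y' ∈ β, ∀ z' ∈ δ,
          x = y + z → x' = y' + z' → omegaJ n y z' = 0) := by
  intro x hx
  simpa only [sympForm_apply] using LinearMap.BilinForm.mem_inf_sup_inf_iff
    (sympForm_nondegenerate n) (sympForm_isRefl n) hα.orthogonal_eq hβ.orthogonal_eq
    hδ.orthogonal_eq hx
end
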